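/- Every k-chordal graph has treelength at most k. In particular, a graph with no induced cycle of length at least k+1 admits a tree decomposition in which any two vertices sharing a bag are at distance at most k. -/

import Mathlib

/-!
Fix a root `r` and split `G` into the layers `L i` of vertices at distance `i` from `r`. The
connected components of the subgraphs induced by `{v | i ≤ dist r v}`, for all `i`, form a tree
under inclusion, and the bag of a component is its part in the first layer `L i` together with
the neighbours of that part in `L (i - 1)`; this is a tree decomposition.

For `3 ≤ k`, two vertices of a bag are at distance at most `k`. The essential case is a vertex
`x ∈ L m` joined through the layers beyond `m` to some `y ∈ L (m + 1)`: choosing a neighbour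
`y' ∈ L m` of `y` not adjacent to `x`, a shortest detour from `x` through the deep layers to the
neighbourhood of `y'` and a shortest return from `y'` to `x` through the layers below `m` close up
into an induced cycle, of length more than `dist x y`, so `dist x y < k`.

For `k < 3` a `k`-chordal graph has no induced cycle at all, hence is a tree (a shortest cycle is
induced), and the bags `{v, parent v}` of the tree itself have diameter at most one.
-/

/-- A graph is `k`-chordal if it has no induced cycle of length at least `k+1`. -/
def IsKChordal {V : Type*} (G : SimpleGraph V) (k : ℕ) : Prop :=
  ∀ (a : V) (c : G.Walk a a), c.IsCycle →
    (∀ u ∈ c.support, ∀ v ∈ c.support, G.Adj u v → s(u, v) ∈ c.edges) →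
    c.length ≤ k

namespace SimpleGraph

variable {V W : Type*} {G : SimpleGraph V} {u v : V}

namespace Walk

theorem dist_getVert_of_length_eq_dist {p : G.Walk u v} (hp : p.length = G.dist u v) {n : ℕ}
    (hn : n ≤ p.length) : G.dist u (p.getVert n) = n := by
  have := length_eq_dist_of_subwalk hp (p.isSubwalk_take n)
  rw [take_length, min_eq_left hn] at this
  exact this.symm

theorem dist_lt_of_length_eq_dist {p : G.Walk u v} (hp : p.length = G.dist u v) {z : V}
    (hz : z ∈ p.support) (hzv : z ≠ v) : G.dist u z < G.dist u v := by
  obtain ⟨n, rfl, hn⟩ := mem_support_iff_exists_getVert.1 hz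
  rw [dist_getVert_of_length_eq_dist hp hn, ← hp]
  refine lt_of_le_of_ne hn ?_
  rintro rfl
  exact hzv p.getVert_length

theorem isChordless_of_length_eq_dist {p : G.Walk u v} (hp : p.length = G.dist u v) :
    p.IsChordless := by
  rw [isChordless_iff_forall_mem_edges]
  intro a b ha hb hab
  obtain ⟨i, rfl, hi⟩ := mem_support_iff_exists_getVert.1 ha
  obtain ⟨j, rfl, hj⟩ := mem_support_iff_exists_getVert.1 hb
  have hij : i ≠ j := by rintro rfl; exact hab.ne rfl
  have hdist := hab.diff_dist_adj (u := u)
  rw [dist_getVert_of_length_eq_dist hp hi, dist_getVert_of_length_eq_dist hp hj] at hdist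
  rw [mk_mem_edges_iff_exists]
  rcases hdist with h | rfl | h
  · omega
  · exact ⟨i, by omega, rfl⟩
  · obtain rfl : i = j + 1 := by omega
    exact ⟨j, by omega, Sym2.eq_swap⟩

theorem IsChordless.map {G' : SimpleGraph W} (f : G ↪g G') {p : G.Walk u v}
    (hp : p.IsChordless) : (p.map f.toHom).IsChordless := by
  rw [isChordless_iff_forall_mem_edges] at hp ⊢
  simp only [support_map, edges_map, List.mem_map]
  rintro _ _ ⟨a, ha, rfl⟩ ⟨b, hb, rfl⟩ hab
  exact ⟨s(a, b), hp ha hb (f.map_adj_iff.1 hab), rfl⟩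

theorem mem_of_mem_support_map_induce {s : Set V} {u v : s} (p : (G.induce s).Walk u v) {z : V}
    (hz : z ∈ (p.map (Embedding.induce s).toHom).support) : z ∈ s := by
  obtain ⟨z, -, rfl⟩ := List.mem_map.1 (support_map _ _ ▸ hz)
  exact z.2

theorem isPath_and_isChordless_of_forall_length_le {s : Set V} {p : G.Walk u v}
    (hps : ∀ z ∈ p.support, z ∈ s)
    (hmin : ∀ q : G.Walk u v, (∀ z ∈ q.support, z ∈ s) → p.length ≤ q.length) :
    p.IsPath ∧ p.IsChordless := by
  have hlen : (p.induce s hps).length = p.length := by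
    have := congrArg length (p.map_induce hps)
    rwa [length_map] at this
  have hgeod : (p.induce s hps).length =
      (G.induce s).dist ⟨u, hps u p.start_mem_support⟩ ⟨v, hps v p.end_mem_support⟩ := by
    obtain ⟨q', hq'⟩ := (p.induce s hps).reachable.exists_walk_length_eq_dist
    refine le_antisymm ?_ (dist_le _)
    rw [← hq', hlen, ← length_map (Embedding.induce s).toHom q']
    exact hmin _ fun z => mem_of_mem_support_map_induce q'
  rw [← p.map_induce hps]
  exact ⟨((p.induce s hps).isPath_of_length_eq_dist hgeod).map
    (Embedding.induce (G := G) s).injective, (isChordless_of_length_eq_dist hgeod).map _⟩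

theorem IsPath.ne_of_mem_support_tail {p : G.Walk u v} (hp : p.IsPath) {z : V}
    (hz : z ∈ p.support.tail) : z ≠ u := by
  rintro rfl
  exact (List.nodup_cons.1 (p.cons_tail_support ▸ hp.support_nodup)).1 hz

theorem IsChordless.concat {p : G.Walk u v} (hp : p.IsChordless) {w : V} (h : G.Adj v w)
    (hw : ∀ z ∈ p.support, G.Adj z w → z = v) : (p.concat h).IsChordless := by
  rw [isChordless_iff_forall_mem_edges] at hp ⊢
  simp only [support_concat, edges_concat, List.concat_eq_append, List.mem_append,
    List.mem_singleton]
  rintro a b (ha | rfl) (hb | rfl) hab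
  · exact .inl (hp ha hb hab)
  · exact .inr (by rw [hw a ha hab])
  · exact .inr (by rw [hw b hb hab.symm, Sym2.eq_swap])
  · exact absurd hab (G.irrefl)

theorem IsPath.isCycle_isChordless_append_reverse {p q : G.Walk u v} (hp : p.IsPath)
    (hq : q.IsPath) (hpc : p.IsChordless) (hqc : q.IsChordless) (hq₂ : 2 ≤ q.length)
    (hsep : ∀ a ∈ p.support, ∀ b ∈ q.support,
      a ≠ u → a ≠ v → b ≠ u → b ≠ v → a ≠ b ∧ ¬G.Adj a b) :
    (p.append q.reverse).IsCycle ∧ (p.append q.reverse).IsChordless := by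
  refine ⟨hp.isCycle_append hq.reverse (fun z hz₁ hz₂ => ?_) (.inr (by simp; omega)), ?_⟩
  · have hzu := hp.ne_of_mem_support_tail hz₁
    have hzv := hq.reverse.ne_of_mem_support_tail hz₂
    exact (hsep z (List.mem_of_mem_tail hz₁) z (by simpa using List.mem_of_mem_tail hz₂)
      hzu hzv hzu hzv).1 rfl
  have hcross : ∀ a ∈ p.support, ∀ b ∈ q.support, G.Adj a b → s(a, b) ∈ p.edges ∨
      s(a, b) ∈ q.edges := by
    intro a ha b hb hab
    by_cases ha' : a = u ∨ a = v
    · exact .inr (hqc.mem_edges (by rcases ha' with rfl | rfl <;> simp) hb hab)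
    by_cases hb' : b = u ∨ b = v
    · exact .inl (hpc.mem_edges ha (by rcases hb' with rfl | rfl <;> simp) hab)
    push Not at ha' hb'
    exact absurd hab (hsep a ha b hb ha'.1 ha'.2 hb'.1 hb'.2).2
  rw [isChordless_iff_forall_mem_edges]
  simp only [mem_support_append_iff, support_reverse, List.mem_reverse, edges_append,
    edges_reverse, List.mem_append]
  rintro a b (ha | ha) (hb | hb) hab
  · exact .inl (hpc.mem_edges ha hb hab)
  · exact hcross a ha b hb hab
  · exact (Sym2.eq_swap ▸ hcross b hb a ha hab.symm :)
  · exact .inr (hqc.mem_edges ha hb hab)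

end Walk

theorem Reachable.exists_walk_of_induce {s : Set V} {u v : s} (h : (G.induce s).Reachable u v) :
    ∃ p : G.Walk u v, ∀ z ∈ p.support, z ∈ s := by
  obtain ⟨p⟩ := h
  exact ⟨_, fun z => p.mem_of_mem_support_map_induce⟩

theorem exists_isPath_isChordless_of_walk {s : Set V} (p : G.Walk u v)
    (hp : ∀ z ∈ p.support, z ∈ s) :
    ∃ q : G.Walk u v, q.IsPath ∧ q.IsChordless ∧ ∀ z ∈ q.support, z ∈ s := by
  obtain ⟨q, hqs, hqmin⟩ :=
    (measure fun q : G.Walk u v => q.length).wf.has_min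
      {q | ∀ z ∈ q.support, z ∈ s} ⟨p, hp⟩
  exact ⟨q, Walk.isPath_and_isChordless_of_forall_length_le hqs
    (fun q' hq' => not_lt.1 (hqmin q' hq')) |>.imp_right fun h => ⟨h, hqs⟩⟩

theorem exists_isPath_isChordless_to_adj {s : Set V} {x y w : V} (p : G.Walk x y)
    (hp : ∀ z ∈ p.support, z ∈ s) (hyw : G.Adj y w) :
    ∃ (c : V) (P : G.Walk x c), G.Adj c w ∧ P.IsPath ∧ P.IsChordless ∧
      (∀ z ∈ P.support, z ∈ s) ∧ ∀ z ∈ P.support, G.Adj z w → z = c := by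
  obtain ⟨⟨c, P⟩, ⟨hcw, hPs⟩, hPmin⟩ :=
    (measure fun cP : Σ c, G.Walk x c => cP.2.length).wf.has_min
      {cP | G.Adj cP.1 w ∧ ∀ z ∈ cP.2.support, z ∈ s} ⟨⟨y, p⟩, hyw, hp⟩
  have hPmin' : ∀ {c'} (P' : G.Walk x c'), G.Adj c' w → (∀ z ∈ P'.support, z ∈ s) →
      P.length ≤ P'.length := fun P' h₁ h₂ => not_lt.1 (hPmin ⟨_, P'⟩ ⟨h₁, h₂⟩)
  obtain ⟨hPpath, hPchord⟩ :=
    Walk.isPath_and_isChordless_of_forall_length_le hPs fun P' h => hPmin' P' hcw h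
  refine ⟨c, P, hcw, hPpath, hPchord, hPs, fun z hz hzw => ?_⟩
  classical
  by_contra hzc
  exact (P.length_takeUntil_lt_length hz hzc).not_ge
    (hPmin' _ hzw fun z' hz' => hPs z' (P.support_takeUntil_subset_support hz hz'))

theorem exists_isCycle_isChordless (h : ¬G.IsAcyclic) :
    ∃ (a : V) (c : G.Walk a a), c.IsCycle ∧ c.IsChordless := by
  classical
  obtain ⟨a, c, hc, hgirth⟩ := exists_girth_eq_length.2 h
  refine ⟨a, c, hc, Walk.isChordless_iff_forall_mem_edges.2 fun u w hu hw huw => ?_⟩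
  by_contra hchord
  -- the chord closes up both arcs of `c` between `u` and `w` into circuits, of total length
  -- `c.length + 2`, while neither is shorter than the shortest cycle `c`
  set c' := c.rotate u hu
  have hw' : w ∈ c'.support := (c.mem_support_rotate_iff u hu).2 hw
  have hchord' : s(u, w) ∉ c'.edges := by rwa [(c.rotate_edges u hu).mem_iff]
  have htrail := (hc.rotate hu).isTrail
  have h₁ : (Walk.cons huw (c'.dropUntil w hw')).IsCircuit :=
    ⟨(Walk.isTrail_cons _ _).2 ⟨htrail.dropUntil hw',
      fun he => hchord' (c'.edges_dropUntil_subset_edges hw' he)⟩, by simp⟩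
  have h₂ : (Walk.cons huw.symm (c'.takeUntil w hw')).IsCircuit :=
    ⟨(Walk.isTrail_cons _ _).2 ⟨htrail.takeUntil hw',
      fun he => hchord' (Sym2.eq_swap ▸ c'.edges_takeUntil_subset_edges hw' he)⟩, by simp⟩
  have hsplit : (c'.takeUntil w hw').length + (c'.dropUntil w hw').length = c.length := by
    rw [← Walk.length_append, c'.take_spec hw', Walk.length_rotate]
  have h₁len := h₁.girth_le_length
  have h₂len := h₂.girth_le_length
  rw [Walk.length_cons] at h₁len h₂len
  have := hc.three_le_length
  omega

theorem induce_connected_of_forall_adj {T : SimpleGraph W} {s : Set W} {c : W} (hc : c ∈ s)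
    (hadj : ∀ t ∈ s, t ≠ c → T.Adj c t) : (T.induce s).Connected := by
  rw [connected_iff_exists_forall_reachable]
  refine ⟨⟨c, hc⟩, fun ⟨t, ht⟩ => ?_⟩
  by_cases htc : t = c
  · subst htc; rfl
  · exact Adj.reachable (by simpa using hadj t ht htc)

theorem isTree_fromRel_of_parent [Nonempty W] (h : W → ℕ) (p : W → W)
    (hp : ∀ a, h a ≠ 0 → h (p a) < h a) (hroot : ∀ a b, h a = 0 → h b = 0 → a = b) :
    (fromRel fun a b => h b < h a ∧ p a = b).IsTree := by
  set T := fromRel fun a b => h b < h a ∧ p a = b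
  have hroot_reachable : ∀ a, ∃ b, h b = 0 ∧ T.Reachable a b := by
    intro a
    induction hn : h a using Nat.strong_induction_on generalizing a with
    | _ n ih =>
      by_cases ha : h a = 0
      · exact ⟨a, ha, .rfl⟩
      have hlt := hp a ha
      obtain ⟨b, hb, hreach⟩ := ih _ (hn ▸ hlt) (p a) rfl
      have hadj : T.Adj a (p a) :=
        (fromRel_adj _ _ _).2 ⟨ne_of_apply_ne h hlt.ne', .inl ⟨hlt, rfl⟩⟩
      exact ⟨b, hb, hadj.reachable.trans hreach⟩
  refine ⟨(connected_iff _).2 ⟨fun a a' => ?_, inferInstance⟩, fun v c hc => ?_⟩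
  · obtain ⟨b, hb, hab⟩ := hroot_reachable a
    obtain ⟨b', hb', hab'⟩ := hroot_reachable a'
    exact hab.trans (hroot b b' hb hb' ▸ hab'.symm)
  -- both cycle neighbours of a vertex of maximal height on a cycle would be its parent
  classical
  obtain ⟨m, hm, hmax⟩ := c.support.toFinset.exists_max_image h ⟨v, by simp⟩
  rw [List.mem_toFinset] at hm
  have hc' := hc.rotate hm
  have hparent : ∀ b ∈ (c.rotate m hm).support, T.Adj m b → b = p m := by
    intro b hb hmb
    rcases ((fromRel_adj _ _ _).1 hmb).2 with ⟨-, hb⟩ | ⟨hlt, -⟩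
    · exact hb.symm
    · exact absurd (hmax b (by simpa [Walk.mem_support_rotate_iff] using hb)) (not_le.2 hlt)
  exact hc'.snd_ne_penultimate
    ((hparent _ (Walk.getVert_mem_support _ _) (Walk.adj_snd hc'.not_nil)).trans
      (hparent _ (Walk.getVert_mem_support _ _) (Walk.adj_penultimate hc'.not_nil).symm).symm)

structure IsTreeDecomposition {ι : Type*} (G : SimpleGraph V) (T : SimpleGraph ι)
    (B : ι → Set V) : Prop where
  isTree : T.IsTree
  exists_mem : ∀ v, ∃ t, v ∈ B t
  connected_induce : ∀ v, (T.induce {t | v ∈ B t}).Connected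
  exists_mem_of_adj : ∀ u v, G.Adj u v → ∃ t, u ∈ B t ∧ v ∈ B t

def farFrom (G : SimpleGraph V) (r : V) (i : ℕ) : Set V := {v | i ≤ G.dist r v}

theorem farFrom_succ_subset (G : SimpleGraph V) (r : V) (i : ℕ) :
    G.farFrom r (i + 1) ⊆ G.farFrom r i :=
  fun _ hv => Nat.le_of_succ_le hv

theorem Connected.exists_adj_dist_eq (hG : G.Connected) (r : V) {v : V} {m : ℕ}
    (hv : G.dist r v = m + 1) : ∃ u, G.Adj u v ∧ G.dist r u = m := by
  obtain ⟨p, hp⟩ := hG.exists_walk_length_eq_dist r v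
  have hnil : ¬p.Nil := by rw [← Walk.length_eq_zero_iff]; omega
  refine ⟨p.penultimate, p.adj_penultimate hnil, ?_⟩
  rw [Walk.penultimate, Walk.dist_getVert_of_length_eq_dist hp (Nat.sub_le _ _)]
  omega

theorem Connected.exists_walk_inside_ball (hG : G.Connected) (r : V) {x y : V} {m : ℕ}
    (hx : G.dist r x = m) (hy : G.dist r y = m) :
    ∃ Q : G.Walk x y, ∀ z ∈ Q.support, z ∈ insert x (insert y {z | G.dist r z < m}) := by
  obtain ⟨px, hpx⟩ := hG.exists_walk_length_eq_dist r x
  obtain ⟨py, hpy⟩ := hG.exists_walk_length_eq_dist r y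
  refine ⟨px.reverse.append py, fun z hz => ?_⟩
  rw [Walk.mem_support_append_iff, Walk.support_reverse, List.mem_reverse] at hz
  rcases hz with hz | hz
  · by_cases hzx : z = x
    · exact .inl hzx
    · exact .inr (.inr (hx ▸ Walk.dist_lt_of_length_eq_dist hpx hz hzx))
  · by_cases hzy : z = y
    · exact .inr (.inl hzy)
    · exact .inr (.inr (hy ▸ Walk.dist_lt_of_length_eq_dist hpy hz hzy))

/-- The cycle is glued from a shortest walk `P` from `x` through the layers beyond `m` to the
neighbourhood of `y'`, the last edge into `y'`, and a shortest walk `Q` from `x` to `y'` through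
the layers below `m`. The interiors of the two sides are two layers apart, so no chord joins
them. -/
theorem Connected.exists_isCycle_isChordless_of_layers (hG : G.Connected) {r x y' : V} {m : ℕ}
    (hx : G.dist r x = m) (hy' : G.dist r y' = m) (hxy' : x ≠ y') (hnadj : ¬G.Adj x y')
    {w y : G.farFrom r (m + 1)} (hxw : G.Adj x w) (hy'y : G.Adj y' y)
    (hwy : (G.induce (G.farFrom r (m + 1))).Reachable w y) :
    ∃ (a : V) (Z : G.Walk a a), Z.IsCycle ∧ Z.IsChordless ∧ G.dist x y < Z.length := by
  obtain ⟨q, hq⟩ := hwy.exists_walk_of_induce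
  obtain ⟨c, P, hcy', hPpath, hPchord, hPS, hPfirst⟩ :=
    exists_isPath_isChordless_to_adj (s := insert x (G.farFrom r (m + 1))) (.cons hxw q)
      (by simpa using fun z hz => Or.inr (hq z hz)) hy'y.symm
  obtain ⟨Q, hQ⟩ := hG.exists_walk_inside_ball r hx hy'
  obtain ⟨Q, hQpath, hQchord, hQU⟩ := exists_isPath_isChordless_of_walk Q hQ
  have hPlev : ∀ z ∈ P.support, z ≠ x → m + 1 ≤ G.dist r z :=
    fun z hz hzx => (hPS z hz).resolve_left hzx
  have hy'P : y' ∉ P.support := fun h => by have := hPlev y' h hxy'.symm; omega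
  have hQlen : 2 ≤ Q.length := by
    by_contra! hlt
    interval_cases hl : Q.length
    · exact hxy' (Walk.eq_of_length_eq_zero hl)
    · exact hnadj (Walk.adj_of_length_eq_one hl)
  obtain ⟨hZ, hZchord⟩ := (hPpath.concat hy'P hcy').isCycle_isChordless_append_reverse hQpath
    (hPchord.concat hcy' hPfirst) hQchord hQlen fun a ha b hb hax hay' hbx hby' => by
      have ha := hPlev a (by simpa [Walk.support_concat, hay'] using ha) hax
      have hb : G.dist r b < m := ((hQU b hb).resolve_left hbx).resolve_left hby'
      exact ⟨by rintro rfl; omega, fun hab => by have := hab.diff_dist_adj (u := r); omega⟩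
  refine ⟨x, _, hZ, hZchord, ?_⟩
  have := dist_le ((P.concat hcy').concat hy'y)
  simp only [Walk.length_append, Walk.length_concat, Walk.length_reverse] at this ⊢
  omega

section Chordal

variable {k : ℕ} {r : V}

theorem _root_.IsKChordal.isAcyclic (hch : IsKChordal G k) (hk : k < 3) : G.IsAcyclic := by
  by_contra hac
  obtain ⟨a, c, hc, hchord⟩ := exists_isCycle_isChordless hac
  have := hch a c hc fun u hu v hv => hchord.mem_edges hu hv
  have := hc.three_le_length
  omega

theorem _root_.IsKChordal.dist_lt_of_adj_of_reachable (hch : IsKChordal G k) (hk : 3 ≤ k)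
    (hG : G.Connected) {x : V} {m : ℕ} (hx : G.dist r x = m) {w y : G.farFrom r (m + 1)}
    (hy : G.dist r y = m + 1) (hxw : G.Adj x w)
    (hwy : (G.induce (G.farFrom r (m + 1))).Reachable w y) : G.dist x y < k := by
  obtain ⟨y', hy'y, hy'⟩ := hG.exists_adj_dist_eq r hy
  by_cases hxy' : x = y'
  · subst hxy'
    rw [dist_eq_one_iff_adj.2 hy'y]
    omega
  by_cases hadj : G.Adj x y'
  · have : G.dist x y ≤ 2 := dist_le (Walk.cons hadj hy'y.toWalk)
    omega
  obtain ⟨a, Z, hZ, hZchord, hlen⟩ :=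
    hG.exists_isCycle_isChordless_of_layers hx hy' hxy' hadj hxw hy'y hwy
  have := hch a Z hZ fun u hu v hv => hZchord.mem_edges hu hv
  omega

theorem _root_.IsKChordal.dist_le_of_reachable (hch : IsKChordal G k) (hk : 3 ≤ k)
    (hG : G.Connected) {i : ℕ} {x y : G.farFrom r i} (hx : G.dist r x = i) (hy : G.dist r y = i)
    (hxy : (G.induce (G.farFrom r i)).Reachable x y) : G.dist x y ≤ k := by
  cases i with
  | zero =>
    rw [← hG.dist_eq_zero_iff.1 hx, ← hG.dist_eq_zero_iff.1 hy, dist_self]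
    exact Nat.zero_le _
  | succ m =>
    obtain ⟨x', hx'x, hx'⟩ := hG.exists_adj_dist_eq r hx
    have := hch.dist_lt_of_adj_of_reachable hk hG hx' hy hx'x hxy
    have := hG.dist_triangle (u := (x : V)) (v := x') (w := (y : V))
    rw [dist_eq_one_iff_adj.2 hx'x.symm] at this
    omega

end Chordal

section Layering

variable (G) (r : V)

abbrev LayerComponent : Type _ := Σ i : ℕ, (G.induce (G.farFrom r i)).ConnectedComponent

namespace LayerComponent

variable {G r}

def ofMem {i : ℕ} {v : V} (hv : v ∈ G.farFrom r i) : G.LayerComponent r :=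
  ⟨i, (G.induce _).connectedComponentMk ⟨v, hv⟩⟩

def verts (t : G.LayerComponent r) : Set V :=
  {v | ∃ hv : v ∈ G.farFrom r t.1, (G.induce _).connectedComponentMk ⟨v, hv⟩ = t.2}

def parent : G.LayerComponent r → G.LayerComponent r
  | ⟨0, C⟩ => ⟨0, C⟩
  | ⟨i + 1, C⟩ => ⟨i, C.map (G.induceHomOfLE (G.farFrom_succ_subset r i)).toHom⟩

def bag (t : G.LayerComponent r) : Set V :=
  {v ∈ t.verts | G.dist r v = t.1} ∪ {u | G.dist r u + 1 = t.1 ∧ ∃ v ∈ t.verts, G.Adj u v}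

theorem mem_verts_ofMem {i : ℕ} {v : V} (hv : v ∈ G.farFrom r i) : v ∈ (ofMem hv).verts :=
  ⟨hv, rfl⟩

theorem eq_ofMem {t : G.LayerComponent r} {v : V} (hv : v ∈ t.verts) : t = ofMem hv.1 :=
  Sigma.ext rfl (heq_of_eq hv.2.symm)

theorem ofMem_eq_ofMem {i : ℕ} {u v : V} {hu : u ∈ G.farFrom r i} {hv : v ∈ G.farFrom r i}
    (h : (G.induce (G.farFrom r i)).Reachable ⟨u, hu⟩ ⟨v, hv⟩) : ofMem hu = ofMem hv := by
  rw [ofMem, ofMem, ConnectedComponent.sound h]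

theorem reachable_of_mem_verts {t : G.LayerComponent r} {u v : V} (hu : u ∈ t.verts)
    (hv : v ∈ t.verts) : (G.induce (G.farFrom r t.1)).Reachable ⟨u, hu.1⟩ ⟨v, hv.1⟩ :=
  ConnectedComponent.exact (hu.2.trans hv.2.symm)

theorem fst_parent (t : G.LayerComponent r) : t.parent.1 = t.1 - 1 := by
  obtain ⟨_ | i, C⟩ := t <;> rfl

theorem parent_ofMem {i : ℕ} {v : V} (hv : v ∈ G.farFrom r (i + 1)) :
    (ofMem hv).parent = ofMem (G.farFrom_succ_subset r i hv) :=
  congrArg (Sigma.mk i) (ConnectedComponent.map_mk _ _)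

end LayerComponent

open LayerComponent

def layerTree : SimpleGraph (G.LayerComponent r) :=
  fromRel fun a b => b.1 < a.1 ∧ a.parent = b

variable {G r}

theorem isTree_layerTree (hG : G.Connected) : (G.layerTree r).IsTree := by
  have : Nonempty (G.LayerComponent r) := ⟨ofMem (i := 0) (v := r) (Nat.zero_le _)⟩
  refine isTree_fromRel_of_parent Sigma.fst parent (fun a ha => by rw [fst_parent]; omega) ?_
  rintro ⟨i, C⟩ ⟨j, D⟩ (rfl : i = 0) (rfl : j = 0)
  have : (G.induce (G.farFrom r 0)).Preconnected := fun u v =>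
    ⟨(hG.preconnected u v).some.induce _ fun z _ => Nat.zero_le (G.dist r z)⟩
  rw [this.subsingleton_connectedComponent.elim C D]

theorem isTreeDecomposition_layerTree (hG : G.Connected) :
    IsTreeDecomposition G (G.layerTree r) bag where
  isTree := isTree_layerTree hG
  exists_mem v := ⟨ofMem (le_refl (G.dist r v)), .inl ⟨mem_verts_ofMem _, rfl⟩⟩
  connected_induce v := by
    refine induce_connected_of_forall_adj
      (.inl ⟨mem_verts_ofMem (le_refl (G.dist r v)), rfl⟩) ?_
    rintro ⟨i, C⟩ (⟨hvt, hi⟩ | ⟨hi, y, hyt, hvy⟩) hne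
    · obtain rfl : G.dist r v = i := hi
      exact absurd (eq_ofMem hvt) hne
    obtain rfl : G.dist r v + 1 = i := hi
    refine (fromRel_adj _ _ _).2 ⟨hne.symm, .inr ⟨Nat.lt_succ_self _, ?_⟩⟩
    rw [eq_ofMem hyt, parent_ofMem]
    exact ofMem_eq_ofMem (Adj.reachable (induce_adj.2 hvy.symm))
  exists_mem_of_adj := by
    have key : ∀ {u v}, G.Adj u v → G.dist r u ≤ G.dist r v →
        ∃ t : G.LayerComponent r, u ∈ t.bag ∧ v ∈ t.bag := by
      intro u v huv hle
      have : G.dist r v = G.dist r u ∨ G.dist r v = G.dist r u + 1 := by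
        have := huv.diff_dist_adj (u := r)
        omega
      rcases this with heq | heq
      · have hv : v ∈ G.farFrom r (G.dist r u) := hle
        refine ⟨ofMem (le_refl (G.dist r u)), .inl ⟨mem_verts_ofMem _, rfl⟩,
          .inl ⟨⟨hv, ?_⟩, heq⟩⟩
        exact (ConnectedComponent.sound (Adj.reachable (induce_adj.2 huv))).symm
      · exact ⟨ofMem (le_refl (G.dist r v)), .inr ⟨heq.symm, v, mem_verts_ofMem _, huv⟩,
          .inl ⟨mem_verts_ofMem _, rfl⟩⟩
    intro u v huv
    rcases le_total (G.dist r u) (G.dist r v) with h | h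
    · exact key huv h
    · obtain ⟨t, hv, hu⟩ := key huv.symm h
      exact ⟨t, hu, hv⟩

theorem _root_.IsKChordal.dist_le_of_mem_bag {k : ℕ} (hch : IsKChordal G k) (hk : 3 ≤ k)
    (hG : G.Connected) {t : G.LayerComponent r} {u v : V} (hu : u ∈ t.bag) (hv : v ∈ t.bag) :
    G.dist u v ≤ k := by
  have mixed : ∀ {t : G.LayerComponent r} {u v}, u ∈ t.verts → G.dist r u = t.1 →
      G.dist r v + 1 = t.1 → (∃ a ∈ t.verts, G.Adj v a) → G.dist u v ≤ k := by
    rintro ⟨i, C⟩ u v hu hui (rfl : G.dist r v + 1 = i) ⟨a, ha, hva⟩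
    rw [dist_comm]
    exact (hch.dist_lt_of_adj_of_reachable hk hG rfl (w := ⟨a, ha.1⟩) (y := ⟨u, hu.1⟩) hui
      hva (reachable_of_mem_verts ha hu)).le
  obtain ⟨i, C⟩ := t
  rcases hu with ⟨hu, hui⟩ | ⟨hui, au, hau, huau⟩ <;>
    rcases hv with ⟨hv, hvi⟩ | ⟨hvi, av, hav, hvav⟩
  · exact hch.dist_le_of_reachable hk hG (x := ⟨u, hu.1⟩) (y := ⟨v, hv.1⟩) hui hvi
      (reachable_of_mem_verts hu hv)
  · exact mixed hu hui hvi ⟨av, hav, hvav⟩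
  · rw [dist_comm]
    exact mixed hv hvi hui ⟨au, hau, huau⟩
  · obtain rfl : G.dist r u + 1 = i := hui
    have hvu : G.dist r v = G.dist r u := by change _ + 1 = _ + 1 at hvi; omega
    -- `u` and `v` lie in the layer just before the component, and are joined through it
    have hreach : (G.induce (G.farFrom r (G.dist r u))).Reachable
        ⟨u, le_refl (G.dist r u)⟩ ⟨v, hvu.ge⟩ :=
      (Adj.reachable (induce_adj.2 huau) :
        (G.induce _).Reachable _ ⟨au, G.farFrom_succ_subset r _ hau.1⟩).trans
      (((reachable_of_mem_verts hau hav).map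
        (G.induceHomOfLE (G.farFrom_succ_subset r _)).toHom).trans
        (Adj.reachable (induce_adj.2 hvav.symm)))
    exact hch.dist_le_of_reachable hk hG rfl hvu hreach

end Layering

section Acyclic

variable (G) (r : V)

/-- In a tree rooted at `r`, the vertex `v` together with its parent. -/
def parentBag (v : V) : Set V :=
  insert v {w | G.Adj v w ∧ G.dist r w ≤ G.dist r v}

variable {G r}

theorem IsAcyclic.eq_of_adj_of_dist_le (hac : G.IsAcyclic) (hG : G.Connected) {v w₁ w₂ : V}
    (h₁ : G.Adj v w₁) (h₂ : G.Adj v w₂) (hd₁ : G.dist r w₁ ≤ G.dist r v)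
    (hd₂ : G.dist r w₂ ≤ G.dist r v) : w₁ = w₂ := by
  have hpath : ∀ w, G.Adj v w → G.dist r w ≤ G.dist r v →
      ∃ p : G.Walk r v, p.IsPath ∧ p.penultimate = w := by
    intro w hvw hd
    obtain ⟨p, hp⟩ := hG.exists_walk_length_eq_dist r w
    have hv : v ∉ p.support := fun hv =>
      (Walk.dist_lt_of_length_eq_dist hp hv hvw.ne).not_ge hd
    exact ⟨p.concat hvw.symm, (p.isPath_of_length_eq_dist hp).concat hv hvw.symm,
      p.penultimate_concat _⟩
  obtain ⟨p₁, hp₁, rfl⟩ := hpath w₁ h₁ hd₁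
  obtain ⟨p₂, hp₂, rfl⟩ := hpath w₂ h₂ hd₂
  have hp : p₁ = p₂ :=
    congrArg Subtype.val ((hac.subsingleton_path r v).elim ⟨p₁, hp₁⟩ ⟨p₂, hp₂⟩)
  rw [hp]

theorem isTreeDecomposition_parentBag (hG : G.Connected) (hac : G.IsAcyclic) :
    IsTreeDecomposition G G (G.parentBag r) where
  isTree := ⟨hG, hac⟩
  exists_mem v := ⟨v, Set.mem_insert _ _⟩
  connected_induce v := induce_connected_of_forall_adj (Set.mem_insert v _)
    fun _ ht htv => (ht.resolve_left htv.symm).1.symm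
  exists_mem_of_adj u v huv := by
    rcases le_total (G.dist r u) (G.dist r v) with h | h
    · exact ⟨v, .inr ⟨huv.symm, h⟩, .inl rfl⟩
    · exact ⟨u, .inl rfl, .inr ⟨huv, h⟩⟩

theorem IsAcyclic.dist_le_one_of_mem_parentBag (hac : G.IsAcyclic) (hG : G.Connected)
    {t u v : V} (hu : u ∈ G.parentBag r t) (hv : v ∈ G.parentBag r t) : G.dist u v ≤ 1 := by
  rcases hu with rfl | ⟨hu, hdu⟩ <;> rcases hv with rfl | ⟨hv, hdv⟩
  · simp
  · exact (dist_eq_one_iff_adj.2 hv).le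
  · exact (dist_eq_one_iff_adj.2 hu.symm).le
  · rw [hac.eq_of_adj_of_dist_le hG hu hv hdu hdv, dist_self]
    exact zero_le_one

end Acyclic

end SimpleGraph

open SimpleGraph

theorem stmt10_general {V : Type} (G : SimpleGraph V) (hG : G.Connected)
    (k : ℕ) (hk : 1 ≤ k) (hch : IsKChordal G k) :
    ∃ (ι : Type) (T : SimpleGraph ι) (B : ι → Set V),
      T.IsTree ∧
      (∀ v : V, ∃ t, v ∈ B t) ∧
      (∀ v : V, (T.induce {t | v ∈ B t}).Connected) ∧
      (∀ u v : V, G.Adj u v → ∃ t, u ∈ B t ∧ v ∈ B t) ∧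
      (∀ t, ∀ u ∈ B t, ∀ v ∈ B t, G.dist u v ≤ k) := by
  obtain ⟨r⟩ := hG.nonempty
  obtain ⟨ι, T, B, hdec, hdist⟩ : ∃ (ι : Type) (T : SimpleGraph ι) (B : ι → Set V),
      G.IsTreeDecomposition T B ∧ ∀ t, ∀ u ∈ B t, ∀ v ∈ B t, G.dist u v ≤ k := by
    by_cases hk3 : 3 ≤ k
    · exact ⟨_, _, _, isTreeDecomposition_layerTree (r := r) hG,
        fun _ _ hu _ hv => hch.dist_le_of_mem_bag hk3 hG hu hv⟩
    · have hac := hch.isAcyclic (by omega)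
      exact ⟨_, _, _, isTreeDecomposition_parentBag (r := r) hG hac,
        fun _ _ hu _ hv => (hac.dist_le_one_of_mem_parentBag hG hu hv).trans hk⟩
  exact ⟨ι, T, B, hdec.isTree, hdec.exists_mem, hdec.connected_induce, hdec.exists_mem_of_adj,
    hdist⟩

/-- Every `k`-chordal graph has treelength at most `k`: a connected graph with no induced
cycle of length at least `k+1` admits a tree decomposition in which any two vertices
sharing a bag are at distance at most `k`. -/
theorem stmt10 {V : Type} [Fintype V] (G : SimpleGraph V) (hG : G.Connected)
    (k : ℕ) (hk : 1 ≤ k) (hch : IsKChordal G k) :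
    ∃ (ι : Type) (T : SimpleGraph ι) (B : ι → Set V),
      T.IsTree ∧
      (∀ v : V, ∃ t, v ∈ B t) ∧
      (∀ v : V, (T.induce {t | v ∈ B t}).Connected) ∧
      (∀ u v : V, G.Adj u v → ∃ t, u ∈ B t ∧ v ∈ B t) ∧
      (∀ t, ∀ u ∈ B t, ∀ v ∈ B t, G.dist u v ≤ k) :=
  stmt10_general G hG k hk hch
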